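/- An odd cycle C_{2n+1} (n ≥ 1) has no equitable edge 2-coloring, but has an equitable edge k-coloring for every k ≥ 3; hence its equitable edge chromatic threshold equals 3. -/

import Mathlib

open SimpleGraph

noncomputable def ecount {V : Type*} (G : SimpleGraph V) (φ : Sym2 V → ℕ) (v : V) (i : ℕ) : ℕ :=
  {e ∈ G.edgeSet | v ∈ e ∧ φ e = i}.ncard

/-- φ is an equitable edge k-coloring of G: colors lie in {1,…,k} and at every vertex
the numbers of incident edges in any two color classes differ by at most 1. -/
def IsEquitableEdgeColoring {V : Type*} (G : SimpleGraph V) (k : ℕ) (φ : Sym2 V → ℕ) : Prop :=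
  (∀ e ∈ G.edgeSet, φ e ∈ Finset.Icc 1 k) ∧
  ∀ v : V, ∀ i j : ℕ, 1 ≤ i → i < j → j ≤ k →
    ((ecount G φ v i : ℤ) - (ecount G φ v j : ℤ)).natAbs ≤ 1

/-- The equitable edge chromatic threshold: the least k such that G has an equitable
edge k'-coloring for every k' ≥ k. -/
noncomputable def equitableEdgeThreshold {V : Type*} (G : SimpleGraph V) : ℕ :=
  sInf {k : ℕ | ∀ k', k ≤ k' → ∃ φ, IsEquitableEdgeColoring G k' φ}

/-!
At a vertex of degree two, the two colour counts of an equitable 2-edge-colouring sum to 2 and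
differ by at most 1, so the two incident edges get different colours. On the cycle this makes
`u ↦ colour of the edge u(u+1)` a proper vertex 2-colouring, impossible on an odd cycle.
Conversely, a proper edge colouring is equitable for any number of colours, since each colour
occurs at most once at a vertex; the cycle has one with three colours: alternate two colours
along the path `0, 1, …, N-1` and give the closing edge `{N-1, 0}` the third.
-/

section Equitable

variable {V : Type*} {G : SimpleGraph V} {φ : Sym2 V → ℕ} {v : V}

lemma ecount_eq_ncard (i : ℕ) : ecount G φ v i = {e ∈ G.incidenceSet v | φ e = i}.ncard := by
  simp only [ecount, incidenceSet, Set.sep_ofPred, and_assoc]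

lemma ecount_le_one_of_injOn (hφ : Set.InjOn φ (G.incidenceSet v)) (i : ℕ) :
    ecount G φ v i ≤ 1 := by
  have hsub : {e ∈ G.incidenceSet v | φ e = i}.Subsingleton :=
    fun e he e' he' => hφ he.1 he'.1 (he.2.trans he'.2.symm)
  have := hsub.finite.to_subtype
  rw [ecount_eq_ncard]
  exact Set.ncard_le_one_iff_subsingleton.mpr hsub

lemma isEquitableEdgeColoring_of_injOn {k : ℕ} (hrange : ∀ e ∈ G.edgeSet, φ e ∈ Finset.Icc 1 k)
    (hφ : ∀ v, Set.InjOn φ (G.incidenceSet v)) : IsEquitableEdgeColoring G k φ := by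
  refine ⟨hrange, fun v i j _ _ _ => ?_⟩
  have hi := ecount_le_one_of_injOn (hφ v) i
  have hj := ecount_le_one_of_injOn (hφ v) j
  omega

lemma ecount_one_add_ecount_two (hφ : IsEquitableEdgeColoring G 2 φ)
    (hfin : (G.incidenceSet v).Finite) :
    ecount G φ v 1 + ecount G φ v 2 = (G.incidenceSet v).ncard := by
  have hunion : {e ∈ G.incidenceSet v | φ e = 1} ∪ {e ∈ G.incidenceSet v | φ e = 2}
      = G.incidenceSet v := by
    ext e
    constructor
    · rintro (⟨he, -⟩ | ⟨he, -⟩) <;> exact he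
    · intro he
      have := Finset.mem_Icc.mp (hφ.1 e he.1)
      rcases (by omega : φ e = 1 ∨ φ e = 2) with h | h
      exacts [Or.inl ⟨he, h⟩, Or.inr ⟨he, h⟩]
  have hdisj : Disjoint {e ∈ G.incidenceSet v | φ e = 1} {e ∈ G.incidenceSet v | φ e = 2} :=
    Set.disjoint_left.mpr fun e h₁ h₂ => by simp [h₁.2] at h₂
  rw [ecount_eq_ncard, ecount_eq_ncard, ← Set.ncard_union_eq hdisj (hfin.sep _) (hfin.sep _),
    hunion]

lemma injOn_incidenceSet_of_isEquitableEdgeColoring_two (hφ : IsEquitableEdgeColoring G 2 φ)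
    (hv : (G.incidenceSet v).ncard = 2) : Set.InjOn φ (G.incidenceSet v) := by
  have hsum := ecount_one_add_ecount_two hφ (Set.finite_of_ncard_ne_zero (hv ▸ two_ne_zero))
  have hdiff := hφ.2 v 1 2 le_rfl one_lt_two le_rfl
  have hfiber : ∀ c, c = 1 ∨ c = 2 → {e ∈ G.incidenceSet v | φ e = c}.ncard = 1 := by
    rintro c (rfl | rfl) <;> rw [← ecount_eq_ncard] <;> omega
  intro e he e' he' hee'
  have := Finset.mem_Icc.mp (hφ.1 e he.1)
  obtain ⟨a, ha⟩ := Set.ncard_eq_one.mp (hfiber (φ e) (by omega))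
  have h₁ : e ∈ ({a} : Set _) := ha ▸ ⟨he, rfl⟩
  have h₂ : e' ∈ ({a} : Set _) := ha ▸ ⟨he', hee'.symm⟩
  exact h₁.trans h₂.symm

lemma equitableEdgeThreshold_eq_succ {k : ℕ}
    (hge : ∀ k', k + 1 ≤ k' → ∃ φ, IsEquitableEdgeColoring G k' φ)
    (hk : ¬ ∃ φ, IsEquitableEdgeColoring G k φ) :
    equitableEdgeThreshold G = k + 1 := by
  refine le_antisymm (Nat.sInf_le hge) (le_csInf ⟨_, hge⟩ fun b hb => ?_)
  by_contra! hb'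
  exact hk (hb k (by omega))

end Equitable

section CycleGraph

lemma cycleGraph_incidenceSet {n : ℕ} (v : Fin (n + 2)) :
    (cycleGraph (n + 2)).incidenceSet v = {s(v, v - 1), s(v, v + 1)} := by
  ext e
  constructor
  · intro he
    obtain ⟨w, rfl⟩ := Sym2.mem_iff_exists.mp he.2
    rw [mem_incidence_iff_neighbor, cycleGraph_neighborSet] at he
    rcases he with rfl | rfl
    exacts [Or.inl rfl, Or.inr rfl]
  · rintro (rfl | rfl) <;> rw [mem_incidence_iff_neighbor, cycleGraph_neighborSet]
    exacts [Or.inl rfl, Or.inr rfl]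

lemma Fin.sub_one_ne_add_one {n : ℕ} (v : Fin (n + 3)) : v - 1 ≠ v + 1 := by
  rw [Ne, sub_eq_iff_eq_add, add_assoc, left_eq_add]
  exact ne_of_beq_false rfl

lemma ncard_incidenceSet_cycleGraph {n : ℕ} (v : Fin (n + 3)) :
    ((cycleGraph (n + 3)).incidenceSet v).ncard = 2 := by
  rw [cycleGraph_incidenceSet, Set.ncard_pair]
  exact fun h => v.sub_one_ne_add_one (Sym2.congr_right.mp h)

lemma mk_mem_edgeSet_cycleGraph {n : ℕ} (u : Fin (n + 2)) :
    s(u, u + 1) ∈ (cycleGraph (n + 2)).edgeSet :=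
  cycleGraph_adj.mpr (Or.inr (add_sub_cancel_left u 1))

def cycleEdgeColoring (N : ℕ) : Sym2 (Fin N) → ℕ :=
  Sym2.lift ⟨fun a b => if min a.val b.val = 0 ∧ max a.val b.val = N - 1 then 3
    else min a.val b.val % 2 + 1, fun a b => by dsimp only; rw [min_comm, max_comm]⟩

lemma cycleEdgeColoring_mem_Icc (N : ℕ) (e : Sym2 (Fin N)) :
    cycleEdgeColoring N e ∈ Finset.Icc 1 3 := by
  induction e using Sym2.ind with
  | _ a b =>
    simp only [cycleEdgeColoring, Sym2.lift_mk, Finset.mem_Icc]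
    split_ifs <;> omega

lemma cycleEdgeColoring_injOn {n : ℕ} (v : Fin (n + 3)) :
    Set.InjOn (cycleEdgeColoring (n + 3)) ((cycleGraph (n + 3)).incidenceSet v) := by
  rw [cycleGraph_incidenceSet, Set.injOn_pair]
  refine fun h => absurd h ?_
  simp only [cycleEdgeColoring, Sym2.lift_mk, Fin.coe_sub_one, Fin.val_add_one, Fin.ext_iff,
    Fin.val_last, Fin.val_zero]
  have := v.isLt
  split_ifs <;> omega

lemma exists_isEquitableEdgeColoring_cycleGraph {N k : ℕ} (hN : 3 ≤ N) (hk : 3 ≤ k) :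
    ∃ φ, IsEquitableEdgeColoring (cycleGraph N) k φ := by
  obtain ⟨n, rfl⟩ := Nat.exists_eq_add_of_le' hN
  exact ⟨cycleEdgeColoring (n + 3), isEquitableEdgeColoring_of_injOn
    (fun e _ => Finset.Icc_subset_Icc_right hk (cycleEdgeColoring_mem_Icc _ e))
    cycleEdgeColoring_injOn⟩

lemma not_exists_isEquitableEdgeColoring_two_cycleGraph {N : ℕ} (hN : 3 ≤ N) (hodd : Odd N) :
    ¬ ∃ φ, IsEquitableEdgeColoring (cycleGraph N) 2 φ := by
  rintro ⟨φ, hφ⟩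
  obtain ⟨n, rfl⟩ := Nat.exists_eq_add_of_le' hN
  have hconsec : ∀ u : Fin (n + 3), φ s(u, u + 1) ≠ φ s(u + 1, u + 1 + 1) := by
    intro u h
    have hinj := injOn_incidenceSet_of_isEquitableEdgeColoring_two hφ
      (ncard_incidenceSet_cycleGraph (u + 1))
    rw [cycleGraph_incidenceSet, Set.injOn_pair] at hinj
    have hprev : s(u + 1, u + 1 - 1) = s(u, u + 1) := by rw [add_sub_cancel_right, Sym2.eq_swap]
    exact (u + 1).sub_one_ne_add_one (Sym2.congr_right.mp (hinj (hprev ▸ h)))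
  let c : (cycleGraph (n + 3)).Coloring (Finset.Icc 1 2) :=
    Coloring.mk (fun u => ⟨φ s(u, u + 1), hφ.1 _ (mk_mem_edgeSet_cycleGraph u)⟩) fun {u v} huv => by
      rcases cycleGraph_adj.mp huv with h | h
      · rw [eq_add_of_sub_eq' h]
        exact fun hc => hconsec v (congrArg Subtype.val hc).symm
      · rw [eq_add_of_sub_eq' h]
        exact fun hc => hconsec u (congrArg Subtype.val hc)
  have h := c.colorable.chromaticNumber_le
  rw [chromaticNumber_cycleGraph_of_odd _ (by omega) hodd] at h
  norm_num at h

end CycleGraph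

/-- An odd cycle C_{2n+1} (n ≥ 1) has no equitable edge 2-coloring, has an equitable
edge k-coloring for every k ≥ 3, and its equitable edge chromatic threshold equals 3. -/
theorem stmt3 (n : ℕ) (hn : 1 ≤ n) :
    (¬ ∃ φ, IsEquitableEdgeColoring (cycleGraph (2 * n + 1)) 2 φ) ∧
    (∀ k : ℕ, 3 ≤ k → ∃ φ, IsEquitableEdgeColoring (cycleGraph (2 * n + 1)) k φ) ∧
    equitableEdgeThreshold (cycleGraph (2 * n + 1)) = 3 := by
  have hN : 3 ≤ 2 * n + 1 := by omega
  have hno := not_exists_isEquitableEdgeColoring_two_cycleGraph hN (odd_two_mul_add_one n)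
  have hge := fun k => exists_isEquitableEdgeColoring_cycleGraph (k := k) hN
  exact ⟨hno, hge, equitableEdgeThreshold_eq_succ hge hno⟩
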